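/- Fix s_0 > 0. There exists a constant C > 0 (depending only on s_0) such that for all real x, y and all s with s_0/2 < s < 2 s_0, |∂/∂s W_s(x,y)| ≤ C e^{-(x-y)^2/(64 s_0)} e^{-s_0/4} (1 - e^{-s_0})^{-3/2}, where W_s(x,y) is the Hermite heat kernel. -/

import Mathlib

/-!
For `s > 0` put `u = e^{-s}`, `a = 1 - u²` and `Q = (x - u y)² + (y - u x)²`. Then
`W_s = π^{-1/2} e^{φ(s)}` with `φ(s) = (-s - log a)/2 - Q/(2a)`, so `∂_s W_s = W_s φ'(s)` where
`φ' = (1 + u²)(Q - a)/(2a²) - (x² + y²)/2` is at most `4(1 + x² + y²)/a²` in absolute value.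
Since `2Q = (1 - u)²(x + y)² + (1 + u)²(x - y)²`, both `(x - y)² ≤ 2Q` and `(1 - u)²(x² + y²) ≤ Q`:
one half of the Gaussian factor `e^{-Q/(2a)}` gives `e^{-(x-y)²/(16 s)}` (as `a ≤ 2s`), the other
absorbs the quadratic growth of `φ'`. For `s₀/2 < s < 2s₀` every remaining factor is bounded in
terms of `s₀` alone.
-/

open MeasureTheory Real

/-- The Hermite (Mehler) heat kernel `W_s(x,y)`. -/
noncomputable def hermiteHeatKernel (s x y : ℝ) : ℝ :=
  Real.pi ^ (-(1 : ℝ) / 2) * (Real.exp (-s) / (1 - Real.exp (-2 * s))) ^ ((1 : ℝ) / 2) *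
    Real.exp (-((x - Real.exp (-s) * y) ^ 2 + (y - Real.exp (-s) * x) ^ 2) /
      (2 * (1 - Real.exp (-2 * s))))

lemma one_add_mul_exp_neg_mul_le {c t : ℝ} (hc : 0 < c) (ht : 0 ≤ t) :
    (1 + t) * exp (-(c * t)) ≤ 1 + 1 / c := by
  have h1 : exp (-(c * t)) ≤ 1 := exp_le_one_iff.mpr (by nlinarith)
  have h2 : c * t * exp (-(c * t)) ≤ 1 :=
    (mul_exp_neg_le_exp_neg_one _).trans (exp_le_one_iff.mpr (by norm_num))
  have h3 : t * exp (-(c * t)) ≤ 1 / c := by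
    rw [le_div_iff₀ hc]; linarith
  linarith

lemma exp_neg_two_mul_eq_sq (s : ℝ) : exp (-2 * s) = exp (-s) ^ 2 := by
  rw [← exp_nat_mul]; congr 1; push_cast; ring

lemma one_sub_exp_neg_sq_pos {s : ℝ} (hs : 0 < s) : 0 < 1 - exp (-s) ^ 2 := by
  have : exp (-s) < 1 := exp_lt_one_iff.mpr (by linarith)
  nlinarith [exp_pos (-s)]

noncomputable def mehlerQuad (u x y : ℝ) : ℝ := (x - u * y) ^ 2 + (y - u * x) ^ 2

lemma mehlerQuad_nonneg (u x y : ℝ) : 0 ≤ mehlerQuad u x y := by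
  unfold mehlerQuad; positivity

section MehlerQuad

variable {u : ℝ} (x y : ℝ)

lemma sub_sq_le_two_mul_mehlerQuad (hu : 0 ≤ u) : (x - y) ^ 2 ≤ 2 * mehlerQuad u x y := by
  unfold mehlerQuad
  nlinarith [sq_nonneg ((x + y) * (1 - u)),
    mul_nonneg (by positivity : 0 ≤ 2 * u + u ^ 2) (sq_nonneg (x - y))]

lemma one_sub_sq_mul_le_mehlerQuad (hu : 0 ≤ u) :
    (1 - u) ^ 2 * (x ^ 2 + y ^ 2) ≤ mehlerQuad u x y := by
  unfold mehlerQuad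
  nlinarith [mul_nonneg hu (sq_nonneg (x - y))]

lemma mehlerQuad_le (hu0 : 0 ≤ u) (hu1 : u ≤ 1) : mehlerQuad u x y ≤ 4 * (x ^ 2 + y ^ 2) := by
  unfold mehlerQuad
  nlinarith [mul_nonneg hu0 (sq_nonneg (x + y)),
    mul_nonneg (mul_nonneg (sub_nonneg.mpr hu1) (by linarith : 0 ≤ 3 + u))
      (add_nonneg (sq_nonneg x) (sq_nonneg y))]

end MehlerQuad

noncomputable def mehlerLogDeriv (u x y : ℝ) : ℝ :=
  (1 + u ^ 2) * (mehlerQuad u x y - (1 - u ^ 2)) / (2 * (1 - u ^ 2) ^ 2) - (x ^ 2 + y ^ 2) / 2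

lemma abs_mehlerLogDeriv_le {u : ℝ} (x y : ℝ) (hu0 : 0 ≤ u) (hu1 : u < 1) :
    |mehlerLogDeriv u x y| ≤ 4 * (1 + (x ^ 2 + y ^ 2)) / (1 - u ^ 2) ^ 2 := by
  set a := 1 - u ^ 2 with ha
  have ha0 : 0 < a := by nlinarith
  have ha1 : a ≤ 1 := by nlinarith
  have ha2 : a ^ 2 ≤ 1 := pow_le_one₀ ha0.le ha1
  have hu2 : 0 ≤ 1 + u ^ 2 ∧ 1 + u ^ 2 ≤ 2 := ⟨by positivity, by nlinarith⟩
  have hr : 0 ≤ x ^ 2 + y ^ 2 := by positivity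
  have hQ0 := mehlerQuad_nonneg u x y
  have hQ := mehlerQuad_le x y hu0 hu1.le
  have hscaled : mehlerLogDeriv u x y * (2 * a ^ 2) =
      (1 + u ^ 2) * (mehlerQuad u x y - a) - a ^ 2 * (x ^ 2 + y ^ 2) := by
    unfold mehlerLogDeriv; rw [← ha]; field_simp
  have hbound : |mehlerLogDeriv u x y * (2 * a ^ 2)| ≤ 8 * (1 + (x ^ 2 + y ^ 2)) := by
    rw [hscaled, abs_le]
    constructor
    · nlinarith [mul_nonneg hu2.1 hQ0, mul_le_mul hu2.2 ha1 ha0.le zero_le_two,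
        mul_le_mul_of_nonneg_right ha2 hr]
    · nlinarith [mul_nonneg hu2.1 ha0.le, mul_nonneg (sq_nonneg a) hr,
        mul_le_mul hu2.2 hQ hQ0 zero_le_two]
  rw [abs_mul, abs_of_pos (by positivity : 0 < 2 * a ^ 2)] at hbound
  rw [le_div_iff₀ (by positivity)]
  linarith

noncomputable def mehlerExponent (s x y : ℝ) : ℝ :=
  (-s - log (1 - exp (-s) ^ 2)) / 2 - mehlerQuad (exp (-s)) x y / (2 * (1 - exp (-s) ^ 2))

lemma hasDerivAt_mehlerExponent {s : ℝ} (x y : ℝ) (hs : 0 < s) :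
    HasDerivAt (fun t => mehlerExponent t x y) (mehlerLogDeriv (exp (-s)) x y) s := by
  have ha0 := one_sub_exp_neg_sq_pos hs
  have hu : HasDerivAt (fun t => exp (-t)) (-exp (-s)) s := by
    simpa using (hasDerivAt_neg s).exp
  have ha : HasDerivAt (fun t => 1 - exp (-t) ^ 2) (2 * exp (-s) ^ 2) s :=
    ((hu.pow 2).const_sub 1).congr_deriv (by ring)
  have hQ : HasDerivAt (fun t => mehlerQuad (exp (-t)) x y)
      (2 * exp (-s) * (2 * x * y - exp (-s) * (x ^ 2 + y ^ 2))) s :=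
    ((((hu.mul_const y).const_sub x).pow 2).add
      (((hu.mul_const x).const_sub y).pow 2)).congr_deriv (by ring)
  refine ((((hasDerivAt_neg s).sub (ha.log ha0.ne')).div_const 2).sub
    (hQ.div (ha.const_mul 2) (by positivity))).congr_deriv ?_
  unfold mehlerLogDeriv mehlerQuad
  field_simp
  ring

lemma hermiteHeatKernel_eq_exp {s : ℝ} (x y : ℝ) (hs : 0 < s) :
    hermiteHeatKernel s x y = π ^ (-(1 : ℝ) / 2) * exp (mehlerExponent s x y) := by
  have ha0 := one_sub_exp_neg_sq_pos hs
  have hsqrt : (exp (-s) / (1 - exp (-s) ^ 2)) ^ ((1 : ℝ) / 2) =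
      exp ((-s - log (1 - exp (-s) ^ 2)) / 2) := by
    rw [rpow_def_of_pos (by positivity), log_div (exp_ne_zero _) ha0.ne', log_exp]
    congr 1; ring
  rw [hermiteHeatKernel, mehlerExponent, mehlerQuad, exp_neg_two_mul_eq_sq, hsqrt, mul_assoc,
    ← exp_add]
  congr 2; ring

lemma hermiteHeatKernel_nonneg {s : ℝ} (x y : ℝ) (hs : 0 < s) : 0 ≤ hermiteHeatKernel s x y := by
  rw [hermiteHeatKernel_eq_exp x y hs]; positivity

lemma hasDerivAt_hermiteHeatKernel {s : ℝ} (x y : ℝ) (hs : 0 < s) :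
    HasDerivAt (fun t => hermiteHeatKernel t x y)
      (hermiteHeatKernel s x y * mehlerLogDeriv (exp (-s)) x y) s := by
  have hexp := ((hasDerivAt_mehlerExponent x y hs).exp).const_mul (π ^ (-(1 : ℝ) / 2))
  rw [hermiteHeatKernel_eq_exp x y hs, mul_assoc]
  refine hexp.congr_of_eventuallyEq ?_
  filter_upwards [eventually_gt_nhds hs] with t ht using hermiteHeatKernel_eq_exp x y ht

lemma mehlerExponent_le {s : ℝ} (x y : ℝ) (hs : 0 < s) :
    mehlerExponent s x y ≤ -log (1 - exp (-s) ^ 2) + -(x - y) ^ 2 / (16 * s) +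
      -((1 - exp (-s)) ^ 2 / 4 * (x ^ 2 + y ^ 2)) := by
  set u := exp (-s)
  set a := 1 - u ^ 2
  set Q := mehlerQuad u x y
  have hu0 : 0 ≤ u := (exp_pos _).le
  have ha0 : 0 < a := one_sub_exp_neg_sq_pos hs
  have ha1 : a ≤ 1 := by nlinarith
  have ha2 : a ≤ 2 * s := by
    have := add_one_le_exp (-2 * s)
    rw [exp_neg_two_mul_eq_sq] at this
    linarith
  have hQ0 : 0 ≤ Q := mehlerQuad_nonneg u x y
  have hdiag : (x - y) ^ 2 / (16 * s) ≤ Q / (4 * a) := by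
    rw [div_le_div_iff₀ (by positivity) (by positivity)]
    nlinarith [sub_sq_le_two_mul_mehlerQuad x y hu0, mul_le_mul_of_nonneg_left ha2 hQ0]
  have hfar : (1 - u) ^ 2 / 4 * (x ^ 2 + y ^ 2) ≤ Q / (4 * a) :=
    calc (1 - u) ^ 2 / 4 * (x ^ 2 + y ^ 2) ≤ Q / 4 := by
          linarith [one_sub_sq_mul_le_mehlerQuad x y hu0]
      _ ≤ Q / (4 * a) := by gcongr; linarith
  have hsplit : Q / (2 * a) = Q / (4 * a) + Q / (4 * a) := by field_simp; ring
  have hlog : log a ≤ 0 := log_nonpos ha0.le ha1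
  rw [mehlerExponent, neg_div]
  linarith

lemma hermiteHeatKernel_le {s : ℝ} (x y : ℝ) (hs : 0 < s) :
    hermiteHeatKernel s x y ≤
      exp (-(x - y) ^ 2 / (16 * s)) * exp (-((1 - exp (-s)) ^ 2 / 4 * (x ^ 2 + y ^ 2))) /
        (1 - exp (-s) ^ 2) := by
  have hπ : π ^ (-(1 : ℝ) / 2) ≤ 1 :=
    rpow_le_one_of_one_le_of_nonpos (by linarith [pi_gt_three]) (by norm_num)
  calc hermiteHeatKernel s x y
      ≤ 1 * exp (-log (1 - exp (-s) ^ 2) + -(x - y) ^ 2 / (16 * s) +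
          -((1 - exp (-s)) ^ 2 / 4 * (x ^ 2 + y ^ 2))) := by
        rw [hermiteHeatKernel_eq_exp x y hs]
        gcongr
        exact mehlerExponent_le x y hs
    _ = _ := by
        rw [exp_add, exp_add, exp_neg (log _), exp_log (one_sub_exp_neg_sq_pos hs)]
        ring

lemma abs_deriv_hermiteHeatKernel_le {s : ℝ} (x y : ℝ) (hs : 0 < s) :
    |deriv (fun t => hermiteHeatKernel t x y) s| ≤
      4 * (1 + 4 / (1 - exp (-s)) ^ 2) / (1 - exp (-s) ^ 2) ^ 3 *
        exp (-(x - y) ^ 2 / (16 * s)) := by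
  have hu1 : exp (-s) < 1 := exp_lt_one_iff.mpr (by linarith)
  have ha := one_sub_exp_neg_sq_pos hs
  have hc : 0 < (1 - exp (-s)) ^ 2 / 4 := by have := sub_pos.mpr hu1; positivity
  rw [(hasDerivAt_hermiteHeatKernel x y hs).deriv, abs_mul,
    abs_of_nonneg (hermiteHeatKernel_nonneg x y hs)]
  calc hermiteHeatKernel s x y * |mehlerLogDeriv (exp (-s)) x y|
      ≤ exp (-(x - y) ^ 2 / (16 * s)) * exp (-((1 - exp (-s)) ^ 2 / 4 * (x ^ 2 + y ^ 2))) /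
          (1 - exp (-s) ^ 2) * (4 * (1 + (x ^ 2 + y ^ 2)) / (1 - exp (-s) ^ 2) ^ 2) :=
        mul_le_mul (hermiteHeatKernel_le x y hs)
          (abs_mehlerLogDeriv_le x y (exp_pos _).le hu1) (abs_nonneg _) (by positivity)
    _ = 4 / (1 - exp (-s) ^ 2) ^ 3 * ((1 + (x ^ 2 + y ^ 2)) *
          exp (-((1 - exp (-s)) ^ 2 / 4 * (x ^ 2 + y ^ 2)))) * exp (-(x - y) ^ 2 / (16 * s)) := by
        field_simp
    _ ≤ 4 / (1 - exp (-s) ^ 2) ^ 3 * (1 + 1 / ((1 - exp (-s)) ^ 2 / 4)) *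
          exp (-(x - y) ^ 2 / (16 * s)) := by
        gcongr
        exact one_add_mul_exp_neg_mul_le hc (by positivity)
    _ = _ := by field_simp

theorem stmt7 (s₀ : ℝ) (hs₀ : 0 < s₀) :
    ∃ C > 0, ∀ (x y s : ℝ), s₀ / 2 < s → s < 2 * s₀ →
      |deriv (fun s => hermiteHeatKernel s x y) s| ≤
        C * Real.exp (-(x - y) ^ 2 / (64 * s₀)) * Real.exp (-s₀ / 4) *
          (1 - Real.exp (-s₀)) ^ (-(3 : ℝ) / 2) := by
  have ha₀ : 0 < 1 - exp (-s₀) := sub_pos.mpr (exp_lt_one_iff.mpr (by linarith))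
  have hb : 0 < 1 - exp (-(s₀ / 2)) := sub_pos.mpr (exp_lt_one_iff.mpr (by linarith))
  set M := 4 * (1 + 4 / (1 - exp (-(s₀ / 2))) ^ 2) / (1 - exp (-s₀)) ^ 3
  refine ⟨M / (exp (-s₀ / 4) * (1 - exp (-s₀)) ^ (-(3 : ℝ) / 2)), by positivity,
    fun x y s hs₁ hs₂ => ?_⟩
  have hs : 0 < s := by linarith
  have hb_le : 1 - exp (-(s₀ / 2)) ≤ 1 - exp (-s) := by gcongr
  have ha₀_le : 1 - exp (-s₀) ≤ 1 - exp (-s) ^ 2 := by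
    rw [← exp_neg_two_mul_eq_sq]; gcongr; linarith
  calc |deriv (fun s => hermiteHeatKernel s x y) s|
      ≤ 4 * (1 + 4 / (1 - exp (-s)) ^ 2) / (1 - exp (-s) ^ 2) ^ 3 *
          exp (-(x - y) ^ 2 / (16 * s)) := abs_deriv_hermiteHeatKernel_le x y hs
    _ ≤ M * exp (-(x - y) ^ 2 / (64 * s₀)) := by
        gcongr ?_ * exp ?_
        · exact div_le_div₀ (by positivity) (by gcongr) (by positivity) (by gcongr)
        · rw [neg_div, neg_div, neg_le_neg_iff]
          exact div_le_div_of_nonneg_left (sq_nonneg _) (by positivity) (by linarith)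
    _ = _ := by field_simp
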